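/- Let k be a field and t ≥ 3, z ≥ 2 integers. Let X = J_t ⊕ J_1 and Y = J_z, and let C : X → Y be the k[T]-linear map whose component on J_t is multiplication by T^{z−2} and whose component on J_1 is multiplication by T^{z−1}. Then T²∘C = 0 and the triple (X, Y, C) is indecomposable. -/
import Mathlib


open Polynomial

/-- `J K a` is the `K[T]`-module `K[T]/(T^a)` (with `T` the polynomial variable `X`). -/
abbrev J (K : Type*) [Field K] (a : ℕ) : Type _ :=
  Polynomial K ⧸ Ideal.span {(X : Polynomial K) ^ a}

/-- Multiplication by `T^e` as a `K[T]`-linear map `J_a → J_b`; it is well defined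
when `b ≤ e + a`, and we set it to `0` otherwise. -/
noncomputable def mulTpow (K : Type*) [Field K] (a b e : ℕ) :
    J K a →ₗ[Polynomial K] J K b :=
  if h : b ≤ e + a then
    Submodule.liftQ (Ideal.span {(X : Polynomial K) ^ a})
      ((Ideal.span {(X : Polynomial K) ^ b}).mkQ ∘ₗ
        ((X : Polynomial K) ^ e • (LinearMap.id : Polynomial K →ₗ[Polynomial K] Polynomial K)))
      (by
        refine Submodule.span_le.mpr ?_
        intro x hx
        rw [Set.mem_singleton_iff] at hx
        subst hx
        simp only [SetLike.mem_coe, LinearMap.mem_ker, LinearMap.comp_apply,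
          LinearMap.smul_apply, LinearMap.id_apply, Submodule.mkQ_apply,
          Submodule.Quotient.mk_eq_zero, smul_eq_mul]
        exact Ideal.mem_span_singleton.mpr (by
          rw [← pow_add]; exact pow_dvd_pow X h))
  else 0

/-- A triple `(M, N, C)` is indecomposable if `M ⊕ N ≠ 0` and the only idempotent
endomorphism pairs `(F, G)` (i.e. `G ∘ C = C ∘ F`, `F² = F`, `G² = G`) are `(0, 0)` and
`(id, id)`. -/
def TripleIndecomposable {K : Type*} [Field K] {M N : Type*}
    [AddCommGroup M] [Module (Polynomial K) M]
    [AddCommGroup N] [Module (Polynomial K) N] (C : M →ₗ[Polynomial K] N) : Prop :=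
  (Nontrivial M ∨ Nontrivial N) ∧
  ∀ (F : M →ₗ[Polynomial K] M) (G : N →ₗ[Polynomial K] N),
    G ∘ₗ C = C ∘ₗ F → F ∘ₗ F = F → G ∘ₗ G = G →
      (F = 0 ∧ G = 0) ∨ (F = LinearMap.id ∧ G = LinearMap.id)


section Aux
variable {K : Type*} [Field K]

/-- The quotient map onto `J K n`. -/
noncomputable def Jmk (K : Type*) [Field K] (n : ℕ) :
    Polynomial K →ₗ[Polynomial K] J K n :=
  (Ideal.span {(X : Polynomial K) ^ n}).mkQ

lemma Jmk_surjective (n : ℕ) : Function.Surjective (Jmk K n) :=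
  Submodule.mkQ_surjective _

lemma Jmk_eq_zero {n : ℕ} {p : Polynomial K} :
    Jmk K n p = 0 ↔ (X : Polynomial K) ^ n ∣ p := by
  simp [Jmk, Submodule.Quotient.mk_eq_zero, Ideal.Quotient.eq_zero_iff_mem, Ideal.mem_span_singleton]

lemma Jmk_eq_iff {n : ℕ} {p q : Polynomial K} :
    Jmk K n p = Jmk K n q ↔ (X : Polynomial K) ^ n ∣ p - q := by
  rw [← sub_eq_zero, ← map_sub, Jmk_eq_zero]

lemma smul_Jmk {n : ℕ} (p q : Polynomial K) :
    p • Jmk K n q = Jmk K n (p * q) := by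
  rw [← map_smul, smul_eq_mul]

lemma mulTpow_Jmk {a b e : ℕ} (h : b ≤ e + a) (p : Polynomial K) :
    mulTpow K a b e (Jmk K a p) = Jmk K b ((X : Polynomial K) ^ e * p) := by
  simp only [mulTpow, dif_pos h, Jmk, Submodule.mkQ_apply, Submodule.liftQ_apply,
    LinearMap.comp_apply, LinearMap.smul_apply, LinearMap.id_apply, Submodule.mkQ_apply,
    smul_eq_mul]

end Aux

section Aux2
variable {K : Type*} [Field K]

lemma cancelX {e m : ℕ} {p : Polynomial K}
    (hd : (X : Polynomial K) ^ (e + m) ∣ X ^ e * p) : (X : Polynomial K) ^ m ∣ p := by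
  rw [pow_add, mul_dvd_mul_iff_left (pow_ne_zero _ (X_ne_zero (R := K)))] at hd
  exact hd

lemma notXdvd {p : Polynomial K} (h : (X : Polynomial K) ∣ p) :
    ¬ (X : Polynomial K) ∣ (p - 1) := by
  intro h1
  have : (X : Polynomial K) ∣ 1 := by
    have := dvd_sub h h1
    simpa using this
  exact Polynomial.not_isUnit_X (isUnit_of_dvd_one this)

lemma C_apply (t z : ℕ) (ht : 2 ≤ t) (hz : 1 ≤ z) (p q : Polynomial K) :
    ((mulTpow K t z (z-2)).coprod (mulTpow K 1 z (z-1))) (Jmk K t p, Jmk K 1 q)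
      = Jmk K z ((X : Polynomial K)^(z-2) * p + (X : Polynomial K)^(z-1) * q) := by
  rw [LinearMap.coprod_apply]
  simp only [Prod.fst, Prod.snd]
  rw [mulTpow_Jmk (by omega), mulTpow_Jmk (by omega), ← map_add]

end Aux2

section Key
variable {K : Type*} [Field K]

set_option maxHeartbeats 2000000 in
lemma key_F_zero (t z : ℕ) (ht : 3 ≤ t) (hz : 2 ≤ z)
    (F : (J K t × J K 1) →ₗ[Polynomial K] (J K t × J K 1))
    (hCF : ∀ x, ((mulTpow K t z (z-2)).coprod (mulTpow K 1 z (z-1))) (F x) = 0)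
    (hF : ∀ x, F (F x) = F x) : F = 0 := by
  obtain ⟨w, rfl⟩ : ∃ w, z = w + 2 := ⟨z - 2, by omega⟩
  have ez2 : w + 2 - 2 = w := by omega
  have ez1 : w + 2 - 1 = w + 1 := by omega
  have hXp : Prime (X : Polynomial K) := Polynomial.prime_X
  set e₁ : J K t × J K 1 := (Jmk K t 1, 0) with he₁
  set e₂ : J K t × J K 1 := (0, Jmk K 1 1) with he₂
  obtain ⟨pa, hpa⟩ := Jmk_surjective t (F e₁).1
  obtain ⟨pc, hpc⟩ := Jmk_surjective 1 (F e₁).2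
  obtain ⟨pb, hpb⟩ := Jmk_surjective t (F e₂).1
  obtain ⟨pd, hpd⟩ := Jmk_surjective 1 (F e₂).2
  have hFe₁ : F e₁ = (Jmk K t pa, Jmk K 1 pc) := Prod.ext hpa.symm hpc.symm
  have hFe₂ : F e₂ = (Jmk K t pb, Jmk K 1 pd) := Prod.ext hpb.symm hpd.symm
  have hgen : ∀ p q : Polynomial K, (Jmk K t p, Jmk K 1 q) = p • e₁ + q • e₂ := by
    intro p q
    rw [he₁, he₂, Prod.smul_mk, Prod.smul_mk, smul_zero, smul_zero, smul_Jmk, smul_Jmk,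
      mul_one, mul_one, Prod.mk_add_mk, add_zero, zero_add]
  have hFgen : ∀ p q : Polynomial K, F (Jmk K t p, Jmk K 1 q) = p • F e₁ + q • F e₂ := by
    intro p q; rw [hgen, map_add, map_smul, map_smul]
  -- the second generator is killed by X
  have hB : (X : Polynomial K) ^ (t - 1) ∣ pb := by
    have h2 : (X : Polynomial K) • e₂ = 0 := by
      rw [he₂, Prod.smul_mk, smul_zero, smul_Jmk, mul_one]
      exact Prod.ext rfl (Jmk_eq_zero.mpr (by simpa using dvd_refl (X : Polynomial K)))
    have h3 : (X : Polynomial K) • F e₂ = 0 := by rw [← map_smul, h2, map_zero]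
    rw [hFe₂, Prod.smul_mk, smul_Jmk, smul_Jmk] at h3
    have h4 : Jmk K t (X * pb) = 0 := by
      have := congrArg Prod.fst h3
      simpa using this
    rw [Jmk_eq_zero] at h4
    have h5 : (X : Polynomial K) ^ (1 + (t - 1)) ∣ X ^ 1 * pb := by
      rwa [pow_one, show 1 + (t - 1) = t by omega]
    exact cancelX h5
  -- C ∘ F = 0 at the generators
  have hE1 : (X : Polynomial K) ^ 2 ∣ pa + X * pc := by
    have h := hCF e₁
    rw [hFe₁, C_apply t (w+2) (by omega) (by omega), ez2, ez1, Jmk_eq_zero] at h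
    have h' : (X : Polynomial K) ^ (w + 2) ∣ X ^ w * (pa + X * pc) := by
      have : (X : Polynomial K) ^ w * (pa + X * pc) = X ^ w * pa + X ^ (w+1) * pc := by ring
      rwa [this]
    exact cancelX h'
  have hXd : (X : Polynomial K) ∣ pd := by
    have h := hCF e₂
    rw [hFe₂, C_apply t (w+2) (by omega) (by omega), ez2, ez1, Jmk_eq_zero] at h
    have hdvd1 : (X : Polynomial K) ^ (w + 2) ∣ X ^ w * pb := by
      obtain ⟨pb', rfl⟩ := hB
      rw [← mul_assoc, ← pow_add]
      exact Dvd.dvd.mul_right (pow_dvd_pow X (by omega)) _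
    have h2 : (X : Polynomial K) ^ (w + 1 + 1) ∣ X ^ (w + 1) * pd :=
      (dvd_add_right hdvd1).mp h
    have := cancelX h2
    rwa [pow_one] at this
  -- idempotency at the generators
  have hI11 : (X : Polynomial K) ^ t ∣ pa * pa + pc * pb - pa := by
    have hI := hF e₁
    rw [hFe₁, hFgen, hFe₁, hFe₂, Prod.smul_mk, Prod.smul_mk, smul_Jmk, smul_Jmk,
      smul_Jmk, smul_Jmk, Prod.mk_add_mk, ← map_add, ← map_add] at hI
    have h5 : Jmk K t (pa * pa + pc * pb) = Jmk K t pa := by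
      have := congrArg Prod.fst hI
      simpa using this
    rwa [Jmk_eq_iff] at h5
  have hI21 : (X : Polynomial K) ^ t ∣ pb * pa + pd * pb - pb := by
    have hI := hF e₂
    rw [hFe₂, hFgen, hFe₁, hFe₂, Prod.smul_mk, Prod.smul_mk, smul_Jmk, smul_Jmk,
      smul_Jmk, smul_Jmk, Prod.mk_add_mk, ← map_add, ← map_add] at hI
    have h5 : Jmk K t (pb * pa + pd * pb) = Jmk K t pb := by
      have := congrArg Prod.fst hI
      simpa using this
    rwa [Jmk_eq_iff] at h5
  -- the chain of divisibilities
  have hXa : (X : Polynomial K) ∣ pa := by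
    have h1 : (X : Polynomial K) ∣ pa + X * pc :=
      dvd_trans (dvd_pow_self X (by omega)) hE1
    have := dvd_sub h1 (Dvd.intro pc rfl)
    simpa using this
  have hnota : ¬ (X : Polynomial K) ∣ (pa - 1) := notXdvd hXa
  have ht1a : (X : Polynomial K) ^ (t - 1) ∣ pa := by
    have h1 : (X : Polynomial K) ^ (t - 1) ∣ pa * pa + pc * pb - pa :=
      dvd_trans (pow_dvd_pow X (by omega)) hI11
    have h2 : (X : Polynomial K) ^ (t - 1) ∣ pc * pb := Dvd.dvd.mul_left hB pc
    have h3 := dvd_sub h1 h2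
    have h4 : pa * pa + pc * pb - pa - pc * pb = pa * (pa - 1) := by ring
    rw [h4] at h3
    exact hXp.pow_dvd_of_dvd_mul_right _ hnota h3
  have hXc : (X : Polynomial K) ∣ pc := by
    have h1 : (X : Polynomial K) ^ 2 ∣ pa := dvd_trans (pow_dvd_pow X (by omega)) ht1a
    have h2 : (X : Polynomial K) ^ 2 ∣ X * pc := (dvd_add_right h1).mp hE1
    have h3 : (X : Polynomial K) ^ (1 + 1) ∣ X ^ 1 * pc := by rwa [pow_one]
    have := cancelX h3
    rwa [pow_one] at this
  have hXta : (X : Polynomial K) ^ t ∣ pa := by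
    have h2 : (X : Polynomial K) ^ t ∣ pc * pb := by
      obtain ⟨pc', rfl⟩ := hXc
      obtain ⟨pb', rfl⟩ := hB
      have : (X : Polynomial K) * pc' * (X ^ (t-1) * pb') =
          X ^ (1 + (t-1)) * (pc' * pb') := by rw [pow_add, pow_one]; ring
      rw [this, show 1 + (t - 1) = t by omega]
      exact Dvd.intro _ rfl
    have h3 := dvd_sub hI11 h2
    have h4 : pa * pa + pc * pb - pa - pc * pb = pa * (pa - 1) := by ring
    rw [h4] at h3
    exact hXp.pow_dvd_of_dvd_mul_right _ hnota h3
  have hnotb : ¬ (X : Polynomial K) ∣ (pa + pd - 1) := by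
    intro h1
    have h2 : (X : Polynomial K) ∣ pa + pd := dvd_add hXa hXd
    have := dvd_sub h2 h1
    simpa using Polynomial.not_isUnit_X (isUnit_of_dvd_one (by simpa using this))
  have hXtb : (X : Polynomial K) ^ t ∣ pb := by
    have h4 : pb * pa + pd * pb - pb = pb * (pa + pd - 1) := by ring
    rw [h4] at hI21
    exact hXp.pow_dvd_of_dvd_mul_right _ hnotb hI21
  -- conclude
  have hFe₁0 : F e₁ = 0 := by
    rw [hFe₁]
    exact Prod.ext (Jmk_eq_zero.mpr hXta) (Jmk_eq_zero.mpr (by simpa using hXc))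
  have hFe₂0 : F e₂ = 0 := by
    rw [hFe₂]
    exact Prod.ext (Jmk_eq_zero.mpr hXtb) (Jmk_eq_zero.mpr (by simpa using hXd))
  apply LinearMap.ext
  intro x
  obtain ⟨p, hp⟩ := Jmk_surjective t x.1
  obtain ⟨q, hq⟩ := Jmk_surjective 1 x.2
  have hx : x = (Jmk K t p, Jmk K 1 q) := by rw [hp, hq]
  rw [hx, hFgen, hFe₁0, hFe₂0, smul_zero, smul_zero, add_zero, LinearMap.zero_apply]

end Key

set_option maxHeartbeats 2000000 in
/-- For `t ≥ 3`, `z ≥ 2`, the map `C : J_t ⊕ J_1 → J_z` with components `T^{z-2}` on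
`J_t` and `T^{z-1}` on `J_1` satisfies `T² ∘ C = 0`, and the triple
`(J_t ⊕ J_1, J_z, C)` is indecomposable. -/
theorem triple_1x2_indecomposable (K : Type*) [Field K] (t z : ℕ)
    (ht : 3 ≤ t) (hz : 2 ≤ z) :
    (∀ x, ((X : Polynomial K) ^ 2) •
      ((mulTpow K t z (z - 2)).coprod (mulTpow K 1 z (z - 1))) x = 0) ∧
    TripleIndecomposable ((mulTpow K t z (z - 2)).coprod (mulTpow K 1 z (z - 1))) := by
  have hXp : Prime (X : Polynomial K) := Polynomial.prime_X
  have hXnu : ¬ IsUnit (X : Polynomial K) := Polynomial.not_isUnit_X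
  constructor
  · -- X^2 ∘ C = 0
    intro x
    obtain ⟨p, hp⟩ := Jmk_surjective t x.1
    obtain ⟨q, hq⟩ := Jmk_surjective 1 x.2
    have hx : x = (Jmk K t p, Jmk K 1 q) := by rw [hp, hq]
    rw [hx, C_apply t z (by omega) (by omega), smul_Jmk, Jmk_eq_zero]
    refine ⟨p + X * q, ?_⟩
    have h2 : z - 2 + 2 = z := by omega
    have h1 : z - 1 + 2 = z + 1 := by omega
    calc (X : Polynomial K) ^ 2 * (X ^ (z-2) * p + X ^ (z-1) * q)
        = X ^ (z - 2 + 2) * p + X ^ (z - 1 + 2) * q := by ring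
      _ = X ^ z * p + X ^ z * (X * q) := by rw [h2, h1, pow_succ]; ring
      _ = X ^ z * (p + X * q) := by ring
  · constructor
    · -- nontriviality
      refine Or.inl ⟨⟨(Jmk K t 1, 0), 0, fun h => ?_⟩⟩
      have h1 := congrArg Prod.fst h
      have h2 : Jmk K t 1 = 0 := by simpa using h1
      rw [Jmk_eq_zero] at h2
      exact hXnu (isUnit_of_dvd_one (dvd_trans (dvd_pow_self X (by omega)) h2))
    · intro F G hcomm hF hG
      -- G is multiplication by a polynomial gp which is idempotent mod X^z
      obtain ⟨gp, hgp⟩ := Jmk_surjective z (G (Jmk K z 1))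
      have hGmk : ∀ p : Polynomial K, G (Jmk K z p) = p • G (Jmk K z 1) := by
        intro p; rw [← map_smul, smul_Jmk, mul_one]
      have hidem : (X : Polynomial K) ^ z ∣ gp * (gp - 1) := by
        have h1 := LinearMap.ext_iff.mp hG (Jmk K z 1)
        rw [LinearMap.comp_apply, ← hgp, hGmk gp, ← hgp, smul_Jmk] at h1
        rw [Jmk_eq_iff] at h1
        have h2 : gp * gp - gp = gp * (gp - 1) := by ring
        rwa [h2] at h1
      have hFpt : F ∘ₗ F = F → ∀ x, F (F x) = F x := fun h x => by
        have := LinearMap.ext_iff.mp h x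
        rwa [LinearMap.comp_apply] at this
      have hXdvd : (X : Polynomial K) ∣ gp * (gp - 1) :=
        dvd_trans (dvd_pow_self X (by omega)) hidem
      rcases hXp.dvd_mul.mp hXdvd with hcase | hcase
      · -- X ∣ gp : G = 0, F = 0
        left
        have hnot : ¬ (X : Polynomial K) ∣ (gp - 1) := notXdvd hcase
        have hzd : (X : Polynomial K) ^ z ∣ gp := hXp.pow_dvd_of_dvd_mul_right _ hnot hidem
        have hG1 : G (Jmk K z 1) = 0 := by rw [← hgp, Jmk_eq_zero.mpr hzd]
        have hG0 : G = 0 := by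
          apply LinearMap.ext
          intro x
          obtain ⟨p, hp⟩ := Jmk_surjective z x
          rw [← hp, hGmk, hG1, smul_zero, LinearMap.zero_apply]
        have hCF0 : ∀ x, ((mulTpow K t z (z-2)).coprod (mulTpow K 1 z (z-1))) (F x) = 0 := by
          intro x
          have := LinearMap.ext_iff.mp hcomm x
          rw [hG0] at this
          simpa using this.symm
        exact ⟨key_F_zero t z ht hz F hCF0 (hFpt hF), hG0⟩
      · -- X ∣ gp - 1 : G = id, F = id
        right
        have hnot : ¬ (X : Polynomial K) ∣ gp := by
          intro h1
          exact hXnu (isUnit_of_dvd_one (by simpa using dvd_sub h1 hcase))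
        have hzd : (X : Polynomial K) ^ z ∣ gp - 1 := by
          have h3 : gp * (gp - 1) = (gp - 1) * gp := by ring
          rw [h3] at hidem
          exact hXp.pow_dvd_of_dvd_mul_right _ hnot hidem
        have hG1 : G (Jmk K z 1) = Jmk K z 1 := by rw [← hgp]; exact Jmk_eq_iff.mpr hzd
        set F' : (J K t × J K 1) →ₗ[Polynomial K] (J K t × J K 1) := LinearMap.id - F
          with hF'def
        have hGid : G = LinearMap.id := by
          apply LinearMap.ext
          intro x
          obtain ⟨p, hp⟩ := Jmk_surjective z x
          rw [← hp, hGmk, hG1, smul_Jmk, mul_one, LinearMap.id_apply]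
        have hCF0 : ∀ x, ((mulTpow K t z (z-2)).coprod (mulTpow K 1 z (z-1)))
            (F' x) = 0 := by
          intro x
          have h1 := LinearMap.ext_iff.mp hcomm x
          rw [hGid] at h1
          simp only [LinearMap.comp_apply, LinearMap.id_apply] at h1
          rw [hF'def]
          simp only [LinearMap.sub_apply, LinearMap.id_apply, map_sub]
          rw [← h1, sub_self]
        have hFF : ∀ x, F' (F' x) = F' x := by
          intro x
          have hx := hFpt hF x
          rw [hF'def]
          simp only [LinearMap.sub_apply, LinearMap.id_apply, map_sub, hx]
          abel
        have h0 := key_F_zero t z ht hz F' hCF0 hFF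
        have hFid : F = LinearMap.id := by
          rw [hF'def] at h0
          exact (sub_eq_zero.mp h0).symm
        exact ⟨hFid, hGid⟩
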